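/- arXiv:2211.08970 — 3 statements merged into one kernel-verified Lean document; each statement's English description precedes it below -/
import Mathlib

section
/- Let (Λ, q) be a nondegenerate lattice of rank 2 that represents 0, so that its discriminant equals -d² for some strictly positive integer d. Let α ∈ Λ be primitive isotropic and complete it to a basis {α, β} with q(β) ≥ 0. Then for any γ ∈ Λ with q(γ) < 0 one has q(γ) ≤ -2d/(1 + q(β)). -/
/-!
In the basis `{α, β}` the form is `q(xα + yβ) = 2bxy + cy²` with `b = B(α, β)`, `c = q(β) ≥ 0`, and
the discriminant is `-b²`, so `|b| = |d|`. If `q(γ) = y(2bx + cy) < 0` then, after a change of signs,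
`y ≥ 1` and `n := -(2bx + cy) ≥ 1`, whence
`-q(γ)(1 + c) = yn + ync ≥ n + cy = -2bx ≥ 2|b| ≥ 2d`, using that `bx < 0` with `x` an integer.
-/

section BinaryForm

variable {R M : Type*} [CommRing R] [AddCommGroup M] [Module R M]

theorem LinearMap.apply_add_smul_self_of_isotropic (B : M →ₗ[R] M →ₗ[R] R)
    (hsymm : ∀ u v, B u v = B v u) {α β : M} (hiso : B α α = 0) (x y : R) :
    B (x • α + y • β) (x • α + y • β) = 2 * B α β * x * y + B β β * y ^ 2 := by
  simp only [map_add, map_smul, LinearMap.add_apply, LinearMap.smul_apply, smul_eq_mul, hiso,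
    hsymm β α]
  ring

theorem LinearMap.det_gram_fin_two_of_isotropic (B : M →ₗ[R] M →ₗ[R] R)
    (hsymm : ∀ u v, B u v = B v u) (bas : Module.Basis (Fin 2) R M) (hiso : B (bas 0) (bas 0) = 0) :
    (Matrix.of fun i j => B (bas i) (bas j)).det = -B (bas 0) (bas 1) ^ 2 := by
  rw [Matrix.det_fin_two]
  simp only [Matrix.of_apply, hiso, hsymm (bas 1)]
  ring

end BinaryForm

theorem Int.mul_one_add_le_neg_abs_of_neg {s c x y : ℤ} (hc : 0 ≤ c)
    (hneg : s * x * y + c * y ^ 2 < 0) : (s * x * y + c * y ^ 2) * (1 + c) ≤ -|s| := by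
  wlog hy : 0 < y generalizing x y
  · have hflip : s * -x * -y + c * (-y) ^ 2 = s * x * y + c * y ^ 2 := by ring
    have hy' : y ≠ 0 := by rintro rfl; simp at hneg
    simpa only [hflip] using this (x := -x) (y := -y) (hflip ▸ hneg) (by omega)
  set n := -(s * x + c * y)
  have hn : 1 ≤ n := by nlinarith
  have hsx : s * x ≤ -|s| := by
    have hx : x ≠ 0 := by rintro rfl; nlinarith
    have hsx_neg : s * x < 0 := by nlinarith
    have : |s| ≤ |s * x| := by
      rw [abs_mul]; exact le_mul_of_one_le_right (abs_nonneg s) (Int.one_le_abs hx)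
    rw [abs_of_neg hsx_neg] at this; linarith
  calc (s * x * y + c * y ^ 2) * (1 + c) = -(y * n + (n * (y * c))) := by ring
    _ ≤ -(n + y * c) := by
      have : n ≤ y * n := le_mul_of_one_le_left (by omega) (by omega)
      have : y * c ≤ n * (y * c) := le_mul_of_one_le_left (by positivity) hn
      omega
    _ = s * x := by ring
    _ ≤ -|s| := hsx

theorem stmt0_general (Λ : Type*) [AddCommGroup Λ] [Module ℤ Λ]
    (B : Λ →ₗ[ℤ] Λ →ₗ[ℤ] ℤ) (hsymm : ∀ x y, B x y = B y x)
    (bas : Module.Basis (Fin 2) ℤ Λ) (α β : Λ) (hα : bas 0 = α) (hβ : bas 1 = β)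
    (d : ℤ)
    (hdisc : (Matrix.of fun i j => B (bas i) (bas j)).det = -d ^ 2)
    (hiso : B α α = 0)
    (hβpos : 0 ≤ B β β)
    (γ : Λ) (hγ : B γ γ < 0) :
    ((B γ γ : ℤ) : ℚ) ≤ -2 * (d : ℚ) / (1 + (B β β : ℤ)) := by
  subst hα hβ
  have hb : |B (bas 0) (bas 1)| = |d| := by
    rw [B.det_gram_fin_two_of_isotropic hsymm bas hiso, neg_inj] at hdisc
    exact sq_eq_sq_iff_abs_eq_abs _ _ |>.mp hdisc
  have hγ_coords := bas.sum_repr γ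
  rw [Fin.sum_univ_two] at hγ_coords
  have hq := B.apply_add_smul_self_of_isotropic hsymm (β := bas 1) hiso (bas.repr γ 0) (bas.repr γ 1)
  rw [hγ_coords] at hq
  rw [hq] at hγ ⊢
  have key := Int.mul_one_add_le_neg_abs_of_neg hβpos hγ
  rw [abs_mul, hb, abs_two] at key
  have hd : -(2 * |d|) ≤ -2 * d := by linarith [le_abs_self d]
  rw [le_div_iff₀ (by positivity)]
  exact_mod_cast key.trans hd

/-- Lemma 4.3 of the paper: bound on negative squares in a rank-2 lattice
representing 0, with discriminant -d², primitive isotropic basis vector α and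
second basis vector β with q(β) ≥ 0. -/
theorem stmt0 (Λ : Type*) [AddCommGroup Λ] [Module ℤ Λ]
    (B : Λ →ₗ[ℤ] Λ →ₗ[ℤ] ℤ) (hsymm : ∀ x y, B x y = B y x)
    (bas : Module.Basis (Fin 2) ℤ Λ) (α β : Λ) (hα : bas 0 = α) (hβ : bas 1 = β)
    (d : ℤ) (hd : 0 < d)
    (hdisc : (Matrix.of fun i j => B (bas i) (bas j)).det = -d ^ 2)
    (hiso : B α α = 0)
    (hprim : ∀ (k : ℤ) (v : Λ), α = k • v → IsUnit k)
    (hβpos : 0 ≤ B β β)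
    (γ : Λ) (hγ : B γ γ < 0) :
    ((B γ γ : ℤ) : ℚ) ≤ -2 * (d : ℚ) / (1 + (B β β : ℤ)) :=
  stmt0_general Λ B hsymm bas α β hα hβ d hdisc hiso hβpos γ hγ
end

section
/- Let A ≅ (ℤ/Nℤ)^{2n} with N = r0^n, and let G act on A by automorphisms such that for every divisor d of N the action of G on the subgroup A[d] ≅ (ℤ/dℤ)^{2n} is transitive on nonzero elements. If H ≤ A is a G-invariant subgroup of cardinality r0^{2n}, then H = A[r0]. -/
lemma zmod_torsion_card (m d : ℕ) (hm : m ≠ 0) (hd : d ∣ m) :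
    Nat.card {x : ZMod m // d • x = 0} = d := by
  haveI : NeZero m := ⟨hm⟩
  obtain ⟨k, hk⟩ := hd
  have hd0 : d ≠ 0 := fun h => hm (by simp [hk, h])
  have hk0 : k ≠ 0 := fun h => hm (by simp [hk, h])
  have hset : {x : ZMod m | d • x = 0} = (AddSubgroup.zmultiples ((k : ℕ) : ZMod m) : Set (ZMod m)) := by
    ext x
    simp only [Set.mem_setOf_eq, SetLike.mem_coe, AddSubgroup.mem_zmultiples_iff]
    constructor
    · intro hx
      have hx' : (x.val : ZMod m) = x := ZMod.natCast_zmod_val x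
      have h1 : ((d * x.val : ℕ) : ZMod m) = 0 := by
        push_cast
        rw [hx', ← nsmul_eq_mul, hx]
      rw [ZMod.natCast_eq_zero_iff] at h1
      have h1 : d * k ∣ d * x.val := by rw [← hk]; exact h1
      have h2 : k ∣ x.val := (mul_dvd_mul_iff_left (by exact_mod_cast hd0 : (d:ℕ) ≠ 0)).mp h1
      obtain ⟨t, ht⟩ := h2
      refine ⟨(t : ℤ), ?_⟩
      rw [← hx', ht]
      push_cast
      rw [zsmul_eq_mul]; push_cast; ring
    · rintro ⟨t, rfl⟩
      have h0 : d • ((k : ℕ) : ZMod m) = 0 := by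
        rw [nsmul_eq_mul, ← Nat.cast_mul, ← hk, ZMod.natCast_self]
      rw [smul_comm, h0, smul_zero]
  have : Nat.card {x : ZMod m // d • x = 0} = Nat.card (AddSubgroup.zmultiples ((k : ℕ) : ZMod m)) := by
    exact Nat.card_congr (Equiv.setCongr hset)
  rw [this, Nat.card_zmultiples, ZMod.addOrderOf_coe _ hm,
    Nat.gcd_eq_right ⟨d, by rw [hk, mul_comm]⟩, hk, Nat.mul_div_cancel _ (Nat.pos_of_ne_zero hk0)]

/-- The subgroup case in the proof of Corollary 5.7: an invariant subgroup of
cardinality r₀^{2n} in A ≅ (ℤ/r₀ⁿ)^{2n} is the r₀-torsion subgroup, given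
transitivity of the action on nonzero d-torsion elements for each d ∣ r₀ⁿ. -/
theorem stmt9 (A : Type*) [AddCommGroup A] [Fintype A]
    (r0 n : ℕ) (hr0 : 2 ≤ r0) (hn : 1 ≤ n)
    (iso : A ≃+ (Fin (2 * n) → ZMod (r0 ^ n)))
    (G : Type*) [Group G] [DistribMulAction G A]
    (htrans : ∀ d : ℕ, d ∣ r0 ^ n → ∀ a b : A, d • a = 0 → d • b = 0 →
      a ≠ 0 → b ≠ 0 → ∃ g : G, g • a = b)
    (H : AddSubgroup A) (hinv : ∀ (g : G), ∀ h ∈ H, g • h ∈ H)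
    (hcard : Nat.card H = r0 ^ (2 * n)) :
    (H : Set A) = {a : A | r0 • a = 0} := by
  have hN0 : r0 ^ n ≠ 0 := pow_ne_zero n (by omega)
  -- everything in A is killed by r0^n
  have hkill : ∀ a : A, (r0 ^ n) • a = 0 := by
    intro a
    apply iso.injective
    rw [map_nsmul, map_zero]
    funext i
    simp [Pi.smul_apply, nsmul_eq_mul, ZMod.natCast_self]
  set d := AddMonoid.exponent H with hd
  have hdN : d ∣ r0 ^ n := by
    apply AddMonoid.exponent_dvd_of_forall_nsmul_eq_zero
    intro x
    exact Subtype.ext (by push_cast [hkill]; simp [hkill])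
  have hd0 : d ≠ 0 := fun h => hN0 (Nat.eq_zero_of_zero_dvd (h ▸ hdN))
  have hdH : ∀ a ∈ H, d • a = 0 := by
    intro a ha
    have := AddMonoid.exponent_nsmul_eq_zero (⟨a, ha⟩ : H)
    exact congrArg Subtype.val this
  -- a nonzero element of H
  have hnt : Nontrivial H := by
    have h1 : 1 < Nat.card H := by rw [hcard]; exact Nat.one_lt_pow (by omega) (by omega)
    exact Finite.one_lt_card_iff_nontrivial.mp h1
  obtain ⟨h0, hh0⟩ := exists_ne (0 : H)
  have hh0A : (h0 : A) ≠ 0 := fun h => hh0 (Subtype.ext h)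
  -- H is exactly the d-torsion set
  have hHS : (H : Set A) = {a : A | d • a = 0} := by
    ext a
    constructor
    · exact fun ha => hdH a ha
    · intro ha
      by_cases ha0 : a = 0
      · simpa [ha0] using H.zero_mem
      · obtain ⟨g, hg⟩ := htrans d hdN (h0 : A) a (hdH _ h0.2) ha hh0A ha0
        exact hg ▸ hinv g _ h0.2
  -- counting
  have hcount : Nat.card {a : A // d • a = 0} = d ^ (2 * n) := by
    have e1 : {a : A // d • a = 0} ≃ {v : Fin (2 * n) → ZMod (r0 ^ n) // d • v = 0} :=
      iso.toEquiv.subtypeEquiv (fun a => by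
        change d • a = 0 ↔ d • iso a = 0
        rw [← map_nsmul]
        exact (EmbeddingLike.map_eq_zero_iff).symm)
    have e2 : {v : Fin (2 * n) → ZMod (r0 ^ n) // d • v = 0} ≃
        ∀ i : Fin (2 * n), {x : ZMod (r0 ^ n) // d • x = 0} :=
      (Equiv.subtypeEquiv (Equiv.refl _) (fun v => by
        simp [funext_iff, Pi.smul_apply])).trans Equiv.subtypePiEquivPi
    rw [Nat.card_congr (e1.trans e2), Nat.card_pi]
    simp only [zmod_torsion_card _ d hN0 hdN, Finset.prod_const, Finset.card_univ,
      Fintype.card_fin]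
  have hcardS : Nat.card H = Nat.card {a : A // d • a = 0} := by
    refine Nat.card_congr (Equiv.setCongr ?_)
    exact hHS
  have hdr : d = r0 := by
    have : d ^ (2 * n) = r0 ^ (2 * n) := by rw [← hcount, ← hcardS, hcard]
    exact Nat.pow_left_injective (by omega) this
  rw [hHS, hdr]
end

section
/- Let n ≥ 1 and let e, d₀, i, l be positive integers. Consider the rank-2 lattice Λ = ℤh ⊕ ℤf with q(h) = e, q(f) = 0, q(h,f) = i·l·d₀. If i·l·d₀ > a·(e+1) for a positive rational a, then there is no ξ ∈ Λ with -a ≤ q(ξ) < 0. -/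
/-- Lemma 5.5 of the paper: in the rank-2 lattice ⟨h, f⟩ with q(h) = e, q(f) = 0,
q(h,f) = i·l·d₀ > a·(e+1), there is no vector ξ with -a ≤ q(ξ) < 0. -/
theorem stmt15 (n : ℕ) (hn : 1 ≤ n) (e d0 i l : ℤ)
    (he : 0 < e) (hd0 : 0 < d0) (hi : 0 < i) (hl : 0 < l)
    (a : ℚ) (ha : 0 < a)
    (hbig : ((i * l * d0 : ℤ) : ℚ) > a * ((e : ℚ) + 1)) :
    ∀ x y : ℤ, ¬(-a ≤ ((e * x ^ 2 + 2 * i * l * d0 * x * y : ℤ) : ℚ) ∧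
      ((e * x ^ 2 + 2 * i * l * d0 * x * y : ℤ) : ℚ) < 0) := by
  rintro x y ⟨h1, h2⟩
  set d : ℤ := i * l * d0 with hd
  have hdpos : 0 < d := by positivity
  have hQz : e * x ^ 2 + 2 * i * l * d0 * x * y < 0 := by exact_mod_cast h2
  set t : ℤ := e * x + 2 * d * y with ht
  have hfact : e * x ^ 2 + 2 * i * l * d0 * x * y = x * t := by rw [ht, hd]; ring
  rw [hfact] at hQz
  have key : (1 + e) * (e * x ^ 2 + 2 * i * l * d0 * x * y) ≤ -(2 * d) := by
    rw [hfact]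
    rcases lt_trichotomy x 0 with hx | hx | hx
    · have htpos : 0 < t := by nlinarith
      have hy : 1 ≤ y := by nlinarith
      have h2d : 2 * d ≤ e * (-x) + t := by nlinarith
      have hu : 1 ≤ -x := by omega
      nlinarith [mul_nonneg (mul_nonneg he.le (by linarith : (0:ℤ) ≤ -x)) (by linarith : (0:ℤ) ≤ t - 1),
        mul_nonneg htpos.le (by linarith : (0:ℤ) ≤ -x - 1)]
    · rw [hx] at hQz; simp at hQz
    · have htneg : t < 0 := by nlinarith
      have hy : y ≤ -1 := by nlinarith
      have h2d : 2 * d ≤ e * x + (-t) := by nlinarith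
      have hv : 1 ≤ -t := by omega
      nlinarith [mul_nonneg (mul_nonneg he.le hx.le) (by linarith : (0:ℤ) ≤ -t - 1),
        mul_nonneg (by linarith : (0:ℤ) ≤ -t) (by linarith : (0:ℤ) ≤ x - 1)]
  have keyq : ((1 + e : ℤ) : ℚ) * ((e * x ^ 2 + 2 * i * l * d0 * x * y : ℤ) : ℚ)
      ≤ -(2 * ((d : ℤ) : ℚ)) := by exact_mod_cast key
  have hdq : ((d : ℤ) : ℚ) > a * ((e : ℚ) + 1) := hbig
  have heq : (1 : ℚ) ≤ ((e : ℤ) : ℚ) := by exact_mod_cast he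
  push_cast at keyq hdq heq h1 h2 ⊢
  have hdqpos : (0:ℚ) < ((d : ℤ) : ℚ) := by exact_mod_cast hdpos
  push_cast at hdqpos
  nlinarith [mul_le_mul_of_nonneg_left h1 (by linarith : (0:ℚ) ≤ 1 + (e:ℚ)), keyq, hdq, hdqpos, ha]
end
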